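/- For a symmetric (p,q) random walk (P[S₁=±1]=p, P[S₁=0]=q=1-2p), the sum over j ≥ 1 of K(j) := P[S₁ > 0, ..., S_{j-1} > 0, S_j = 0] equals (1+q)/2. -/

import Mathlib

/-!
Cast to `ℝ`, the shifted walk `n ↦ S (n + 1)` is a martingale for the natural filtration of the
increments, with increments bounded by `1`. By the one-sided martingale bound it converges on the
event where it is bounded below, and an integer-valued convergent sequence is eventually constant.
By the second Borel–Cantelli lemma the walk moves infinitely often, so almost surely `S` is
unbounded below. Along such a path, the first return to `0` through positive values happens
exactly when `S₁ ∈ {0, 1}`: if `S₁ = 1` the walk later goes negative, and since it moves down by at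
most one at a time it hits `0` first. Hence `∑ K (j + 1) = q + p = (1 + q) / 2`.
-/

open MeasureTheory ProbabilityTheory Filter
open scoped ENNReal Topology

section Recurrence

variable {Ω : Type*} {mΩ : MeasurableSpace Ω} {μ : Measure Ω}

theorem ProbabilityTheory.iIndepFun.martingale_sum_range_succ {Y : ℕ → Ω → ℝ}
    (hY : ∀ i, StronglyMeasurable (Y i)) (hindep : iIndepFun Y μ)
    (hint : ∀ i, Integrable (Y i) μ) (hmean : ∀ i, μ[Y i] = 0) :
    Martingale (fun n => ∑ i ∈ Finset.range (n + 1), Y i) (Filtration.natural Y hY) μ := by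
  have := hindep.isProbabilityMeasure
  refine martingale_of_condExp_sub_eq_zero_nat
    (fun n => Finset.stronglyMeasurable_sum _ fun i hi =>
      Filtration.stronglyAdapted_natural hY i |>.mono
        (Filtration.mono _ (Nat.lt_succ_iff.1 (Finset.mem_range.1 hi))))
    (fun n => integrable_finsetSum' _ fun i _ => hint i) fun n => ?_
  have hstep : (∑ i ∈ Finset.range (n + 1 + 1), Y i) - ∑ i ∈ Finset.range (n + 1), Y i
      = Y (n + 1) := by
    rw [Finset.sum_range_succ, add_sub_cancel_left]
  rw [hstep]
  exact (hindep.condExp_natural_ae_eq_of_lt hY n.lt_succ_self).trans (by rw [hmean]; rfl)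

theorem eventually_succ_eq_of_tendsto_intCast {g : ℕ → ℤ} {c : ℝ}
    (h : Tendsto (fun n => (g n : ℝ)) atTop (𝓝 c)) : ∀ᶠ n in atTop, g (n + 1) = g n := by
  have hdiff : Tendsto (fun n => (g (n + 1) : ℝ) - g n) atTop (𝓝 0) := by
    simpa using (h.comp (tendsto_add_atTop_nat 1)).sub h
  filter_upwards [hdiff.eventually (Metric.ball_mem_nhds 0 one_pos)] with n hn
  rw [dist_zero_right, Real.norm_eq_abs] at hn
  have : |g (n + 1) - g n| < 1 := by exact_mod_cast hn
  rw [abs_lt] at this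
  omega

theorem ProbabilityTheory.iIndepFun.ae_frequently_mem {β : Type*} [MeasurableSpace β]
    {X : ℕ → Ω → β} (hmeas : ∀ i, Measurable (X i)) (hindep : iIndepFun X μ)
    {t : Set β} (ht : MeasurableSet t) {ε : ℝ≥0∞} (hε : ε ≠ 0)
    (hlow : ∀ n, ε ≤ μ (X n ⁻¹' t)) :
    ∀ᵐ ω ∂μ, ∃ᶠ n in atTop, X n ω ∈ t := by
  have := hindep.isProbabilityMeasure
  have hsets : iIndepSet (fun n => X n ⁻¹' t) μ :=
    (iIndepSet_iff_meas_biInter fun n => hmeas n ht).2 fun s =>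
      hindep.meas_biInter fun i _ => ⟨t, ht, rfl⟩
  have hsum : ∑' n, μ (X n ⁻¹' t) = ∞ :=
    top_unique <| (ENNReal.tsum_const_eq_top_of_ne_zero hε).symm.le.trans
      (ENNReal.tsum_le_tsum hlow)
  have hlimsup := measure_limsup_eq_one (fun n => hmeas n ht) hsets hsum
  simp_rw [← Set.mem_preimage, ← mem_limsup_iff_frequently_mem]
  have hmeas_limsup := MeasurableSet.measurableSet_limsup fun n => hmeas n ht
  exact (ae_mem_iff_measure_eq hmeas_limsup.nullMeasurableSet).2 (by rw [hlimsup, measure_univ])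

theorem integral_intCast_eq_zero_of_abs_le_one [IsFiniteMeasure μ] {Z : Ω → ℤ}
    (hZ : Measurable Z) (hbdd : ∀ᵐ ω ∂μ, |Z ω| ≤ 1)
    (hsymm : μ (Z ⁻¹' {1}) = μ (Z ⁻¹' {-1})) :
    ∫ ω, (Z ω : ℝ) ∂μ = 0 := by
  have hpm : ∀ z : ℤ, MeasurableSet (Z ⁻¹' {z}) := fun z => hZ (measurableSet_singleton z)
  have hdecomp : (fun ω => (Z ω : ℝ)) =ᵐ[μ]
      fun ω => (Z ⁻¹' {1}).indicator 1 ω - (Z ⁻¹' {-1}).indicator 1 ω := by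
    filter_upwards [hbdd] with ω hω
    obtain h | h | h : Z ω = -1 ∨ Z ω = 0 ∨ Z ω = 1 := by rw [abs_le] at hω; omega
    all_goals simp [h]
  rw [integral_congr_ae hdecomp, integral_sub ((integrable_const 1).indicator (hpm 1))
    ((integrable_const 1).indicator (hpm (-1))), integral_indicator_one (hpm 1),
    integral_indicator_one (hpm (-1)), measureReal_def, measureReal_def, hsymm, sub_self]

theorem MeasureTheory.Martingale.ae_not_bddBelow_of_intCast [IsFiniteMeasure μ]
    {ℱ : Filtration ℕ mΩ} {g : ℕ → Ω → ℤ} {R : ℕ}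
    (hg : Martingale (fun n ω => (g n ω : ℝ)) ℱ μ)
    (hbdd : ∀ᵐ ω ∂μ, ∀ i, |g (i + 1) ω - g i ω| ≤ R)
    (hmove : ∀ᵐ ω ∂μ, ∃ᶠ n in atTop, g (n + 1) ω ≠ g n ω) :
    ∀ᵐ ω ∂μ, ¬BddBelow (Set.range fun n => g n ω) := by
  have hbdd' : ∀ᵐ ω ∂μ, ∀ i,
      |(-fun n ω => (g n ω : ℝ)) (i + 1) ω - (-fun n ω => (g n ω : ℝ)) i ω|
        ≤ (R : NNReal) := by
    filter_upwards [hbdd] with ω hω i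
    simp only [Pi.neg_apply]
    rw [neg_sub_neg, abs_sub_comm, NNReal.coe_natCast]
    exact_mod_cast hω i
  filter_upwards [hg.neg.submartingale.bddAbove_iff_exists_tendsto hbdd', hmove]
    with ω hconv hω hbelow
  obtain ⟨b, hb⟩ := hbelow
  obtain ⟨c, hc⟩ := hconv.1 ⟨-b, by
    rintro _ ⟨n, rfl⟩
    simpa using (Int.cast_le (R := ℝ)).2 (hb ⟨n, rfl⟩)⟩
  exact hω ((eventually_succ_eq_of_tendsto_intCast (c := -c) (by simpa using hc.neg)).mono
    fun n h => not_not.2 h)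

theorem ae_forall_abs_le_one_of_measure_preimage [IsProbabilityMeasure μ] {X : ℕ → Ω → ℤ}
    (hmeas : ∀ i, Measurable (X i)) {a b c : ℝ≥0∞} (habc : a + b + c = 1)
    (hm1 : ∀ i, μ (X i ⁻¹' {-1}) = a)
    (h0 : ∀ i, μ (X i ⁻¹' {0}) = b) (h1 : ∀ i, μ (X i ⁻¹' {1}) = c) :
    ∀ᵐ ω ∂μ, ∀ i, |X i ω| ≤ 1 := by
  rw [ae_all_iff]
  intro i
  have hfull : μ (X i ⁻¹' ↑({-1, 0, 1} : Finset ℤ)) = μ Set.univ := by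
    rw [← sum_measure_preimage_singleton _ fun y _ => hmeas i (measurableSet_singleton y)]
    simp [hm1, h0, h1, ← add_assoc, habc]
  filter_upwards [(ae_mem_iff_measure_eq (hmeas i (Finset.measurableSet _)).nullMeasurableSet).2
    hfull] with ω hω
  simp only [Finset.coe_insert, Finset.coe_singleton, Set.mem_preimage, Set.mem_insert_iff,
    Set.mem_singleton_iff] at hω
  rw [abs_le]
  omega

theorem ae_not_bddBelow_sum_range_of_symmetric {X : ℕ → Ω → ℤ}
    (hmeas : ∀ i, Measurable (X i)) (hindep : iIndepFun X μ) (hbdd : ∀ᵐ ω ∂μ, ∀ i, |X i ω| ≤ 1)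
    (hsymm : ∀ i, μ (X i ⁻¹' {1}) = μ (X i ⁻¹' {-1}))
    {ε : ℝ≥0∞} (hε : ε ≠ 0) (hmove : ∀ i, ε ≤ μ (X i ⁻¹' {0}ᶜ)) :
    ∀ᵐ ω ∂μ, ¬BddBelow (Set.range fun n => ∑ i ∈ Finset.range n, X i ω) := by
  have := hindep.isProbabilityMeasure
  set Y : ℕ → Ω → ℝ := fun i ω => X i ω
  have hYm : ∀ i, StronglyMeasurable (Y i) := fun i =>
    (measurable_from_top.comp (hmeas i)).stronglyMeasurable
  have hmart : Martingale (fun n ω => ((∑ i ∈ Finset.range (n + 1), X i ω : ℤ) : ℝ))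
      (Filtration.natural Y hYm) μ := by
    have := (hindep.comp (fun _ => Int.cast) fun _ => measurable_from_top).martingale_sum_range_succ
      hYm (fun i => Integrable.of_bound (hYm i).aestronglyMeasurable 1 ?_)
      fun i => integral_intCast_eq_zero_of_abs_le_one (hmeas i) ?_ (hsymm i)
    · convert this using 1
      funext n ω
      simp [Y, Finset.sum_apply]
    · filter_upwards [hbdd] with ω hω
      simp only [Y, Real.norm_eq_abs]
      exact_mod_cast hω i
    · filter_upwards [hbdd] with ω hω using hω i
  have hunbdd := hmart.ae_not_bddBelow_of_intCast (R := 1) ?_ ?_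
  · filter_upwards [hunbdd] with ω hω hbelow
    exact hω (hbelow.mono (Set.range_subset_iff.2 fun n => Set.mem_range_self (n + 1)))
  · filter_upwards [hbdd] with ω hω i
    simpa [Finset.sum_range_succ] using hω (i + 1)
  · filter_upwards [(hindep.precomp Nat.succ_injective).ae_frequently_mem
      (fun i => hmeas (i + 1)) (measurableSet_singleton 0).compl hε fun i => hmove (i + 1)]
      with ω hω
    simpa [Finset.sum_range_succ] using hω

end Recurrence

theorem exists_first_return_through_pos_iff {s : ℕ → ℤ} (h0 : s 0 = 0)
    (hstep : ∀ n, s n - 1 ≤ s (n + 1)) (hneg : ∃ n, s n < 0) :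
    (∃ j, (∀ i, 0 < i → i < j + 1 → 0 < s i) ∧ s (j + 1) = 0) ↔ 0 ≤ s 1 := by
  classical
  constructor
  · rintro ⟨j, hpos, hzero⟩
    rcases j with _ | j
    · exact hzero.ge
    · exact (hpos 1 one_pos (by omega)).le
  · intro h1
    have hex : ∃ n, 1 ≤ n ∧ s n ≤ 0 := by
      obtain ⟨n, hn⟩ := hneg
      exact ⟨n, Nat.one_le_iff_ne_zero.2 (by rintro rfl; omega), hn.le⟩
    obtain ⟨j, hj⟩ : ∃ j, Nat.find hex = j + 1 := ⟨Nat.find hex - 1, by grind⟩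
    have hpos : ∀ i, 0 < i → i < j + 1 → 0 < s i := fun i hi hij => by
      have := Nat.find_min hex (hj ▸ hij)
      omega
    refine ⟨j, hpos, ?_⟩
    have hle : s (j + 1) ≤ 0 := hj ▸ (Nat.find_spec hex).2
    rcases j with _ | j
    · exact le_antisymm hle h1
    · have := hpos (j + 1) (by omega) (by omega)
      have := hstep (j + 1)
      omega

section FirstReturn

variable {Ω : Type*} {mΩ : MeasurableSpace Ω} {μ : Measure Ω}

def firstReturnThroughPos (s : ℕ → Ω → ℤ) (j : ℕ) : Set Ω :=
  {ω | (∀ i, 0 < i → i < j → 0 < s i ω) ∧ s j ω = 0}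

theorem measurableSet_firstReturnThroughPos {s : ℕ → Ω → ℤ} (hs : ∀ n, Measurable (s n))
    (j : ℕ) : MeasurableSet (firstReturnThroughPos s j) := by
  simp only [firstReturnThroughPos, Set.ofPred_and, Set.ofPred_forall]
  exact (MeasurableSet.iInter fun i => .iInter fun _ => .iInter fun _ =>
    hs i measurableSet_Ioi).inter (hs j (measurableSet_singleton 0))

theorem pairwise_disjoint_firstReturnThroughPos_succ (s : ℕ → Ω → ℤ) :
    Pairwise (Function.onFun Disjoint fun j => firstReturnThroughPos s (j + 1)) := by
  intro i j hij
  refine Set.disjoint_left.2 fun ω hi hj => ?_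
  rcases hij.lt_or_gt with h | h
  · exact (hj.1 (i + 1) i.succ_pos (by omega)).ne' hi.2
  · exact (hi.1 (j + 1) j.succ_pos (by omega)).ne' hj.2

theorem iUnion_firstReturnThroughPos_succ_ae_eq {s : ℕ → Ω → ℤ} (h0 : ∀ ω, s 0 ω = 0)
    (hstep : ∀ᵐ ω ∂μ, ∀ n, |s (n + 1) ω - s n ω| ≤ 1)
    (hunbdd : ∀ᵐ ω ∂μ, ¬BddBelow (Set.range fun n => s n ω)) :
    (⋃ j, firstReturnThroughPos s (j + 1)) =ᵐ[μ] s 1 ⁻¹' {0, 1} := by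
  refine eventuallyEq_set.2 ?_
  filter_upwards [hstep, hunbdd] with ω hstep hunbdd
  obtain ⟨_, ⟨n, rfl⟩, hn⟩ := not_bddBelow_iff.1 hunbdd 0
  have hstep' : ∀ n, s n ω - 1 ≤ s (n + 1) ω := fun n => by
    have := hstep n
    rw [abs_le] at this
    omega
  have h1 : |s 1 ω - s 0 ω| ≤ 1 := hstep 0
  rw [abs_le, h0] at h1
  simp only [firstReturnThroughPos, Set.mem_iUnion, Set.mem_ofPred_eq, Set.mem_preimage,
    Set.mem_insert_iff, Set.mem_singleton_iff]
  rw [exists_first_return_through_pos_iff (s := fun n => s n ω) (h0 ω) hstep' ⟨n, hn⟩]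
  omega

theorem tsum_measure_firstReturnThroughPos_succ {s : ℕ → Ω → ℤ} (hs : ∀ n, Measurable (s n))
    (h0 : ∀ ω, s 0 ω = 0) (hstep : ∀ᵐ ω ∂μ, ∀ n, |s (n + 1) ω - s n ω| ≤ 1)
    (hunbdd : ∀ᵐ ω ∂μ, ¬BddBelow (Set.range fun n => s n ω)) :
    ∑' j, μ (firstReturnThroughPos s (j + 1)) = μ (s 1 ⁻¹' {0, 1}) := by
  rw [← measure_iUnion (pairwise_disjoint_firstReturnThroughPos_succ s)
    fun j => measurableSet_firstReturnThroughPos hs _]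
  exact measure_congr (iUnion_firstReturnThroughPos_succ_ae_eq h0 hstep hunbdd)

end FirstReturn

/-- For the symmetric `(p,q)` random walk (increments i.i.d. in `{-1,0,1}` with
`P[X=±1]=p`, `P[X=0]=q=1-2p`), the sum over `j ≥ 1` of
`K(j) = P[S₁>0, …, S_{j-1}>0, S_j = 0]` equals `(1+q)/2`. -/
theorem stmt4 {Ω : Type*} [MeasureSpace Ω] (μ : Measure Ω) [IsProbabilityMeasure μ]
    (p q : ℝ) (hp : p ∈ Set.Ioo (0:ℝ) (1/2)) (hq : q = 1 - 2*p)
    (X : ℕ → Ω → ℤ)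
    (hmeas : ∀ i, Measurable (X i))
    (hindep : iIndepFun X μ)
    (hdist1 : ∀ i, μ (X i ⁻¹' {1}) = ENNReal.ofReal p)
    (hdistm1 : ∀ i, μ (X i ⁻¹' {-1}) = ENNReal.ofReal p)
    (hdist0 : ∀ i, μ (X i ⁻¹' {0}) = ENNReal.ofReal q)
    (S : ℕ → Ω → ℤ)
    (hS : ∀ n ω, S n ω = ∑ i ∈ Finset.range n, X i ω)
    (K : ℕ → ℝ≥0∞)
    (hK : ∀ j, K j =
      μ {ω | (∀ i, 0 < i → i < j → 0 < S i ω) ∧ S j ω = 0}) :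
    ∑' j : ℕ, K (j + 1) = ENNReal.ofReal ((1 + q)/2) := by
  obtain ⟨hp0, hp2⟩ := hp
  have hq0 : 0 ≤ q := by linarith
  obtain rfl : S = fun n ω => ∑ i ∈ Finset.range n, X i ω := funext fun n => funext (hS n)
  have hbdd : ∀ᵐ ω ∂μ, ∀ i, |X i ω| ≤ 1 :=
    ae_forall_abs_le_one_of_measure_preimage hmeas (by
      rw [← ENNReal.ofReal_add hp0.le hq0, ← ENNReal.ofReal_add (by linarith) hp0.le, hq,
        show p + (1 - 2 * p) + p = 1 by ring, ENNReal.ofReal_one]) hdistm1 hdist0 hdist1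
  have hrec := ae_not_bddBelow_sum_range_of_symmetric hmeas hindep hbdd
    (fun i => (hdist1 i).trans (hdistm1 i).symm) (ENNReal.ofReal_pos.2 hp0).ne'
    fun i => (hdist1 i).symm.trans_le (measure_mono fun ω (h : X i ω = 1) => by simp [h])
  have hstep : ∀ᵐ ω ∂μ, ∀ n,
      |∑ i ∈ Finset.range (n + 1), X i ω - ∑ i ∈ Finset.range n, X i ω| ≤ 1 := by
    filter_upwards [hbdd] with ω hω n
    simpa [Finset.sum_range_succ] using hω n
  calc ∑' j, K (j + 1) = ∑' j, μ (firstReturnThroughPos _ (j + 1)) := tsum_congr fun j => hK _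
    _ = μ (X 0 ⁻¹' {0, 1}) := by
        rw [tsum_measure_firstReturnThroughPos_succ
          (fun n => Finset.measurable_sum _ fun i _ => hmeas i) (by simp) hstep hrec]
        simp
    _ = ENNReal.ofReal ((1 + q) / 2) := by
        rw [← Finset.coe_pair, ← sum_measure_preimage_singleton _ fun y _ =>
          hmeas 0 (measurableSet_singleton y), Finset.sum_pair zero_ne_one, hdist0, hdist1,
          ← ENNReal.ofReal_add hq0 hp0.le]
        congr 1
        linarith
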